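/- Let n ≥ 1 and let x, y : {1,…,n} → {0,1}. The graph I(x,y) is connected if and only if for every index 1 ≤ i ≤ n, x_i = 0 or y_i = 0. -/

import Mathlib

/-- Vertices of the `Interval` construction: `u i`, `v i`, `a i`, `b i` for
`i ∈ {1, …, n}` (encoded as `Fin n`). -/
inductive IVert (n : ℕ) : Type
  | u : Fin n → IVert n
  | v : Fin n → IVert n
  | a : Fin n → IVert n
  | b : Fin n → IVert n

/-- Edges of `I(x, y)`: `u i ~ a i` and `v i ~ b i`; `v_{i-1} ~ u_i` (consecutive
indices); `a i ~ v i` iff `x i = 0`; `b i ~ u i` and `b i ~ a i` iff `y i = 0`;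
no other edges. -/
def iRel {n : ℕ} (x y : Fin n → Fin 2) : IVert n → IVert n → Prop
  | .u i, .a j => i = j
  | .v i, .b j => i = j
  | .v i, .u k => (k : ℕ) = (i : ℕ) + 1
  | .a i, .v j => i = j ∧ x i = 0
  | .b i, .u j => i = j ∧ y i = 0
  | .b i, .a j => i = j ∧ y i = 0
  | _, _ => False

/-- The `Interval` graph. -/
def IGraph {n : ℕ} (x y : Fin n → Fin 2) : SimpleGraph (IVert n) :=
  SimpleGraph.fromRel (iRel x y)

/-!
Place `u i` and `a i` at position `2 i`, and `v i` and `b i` at position `2 i + 1`. Every edge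
joins vertices whose positions differ by at most one, and the only edges from position `2 i` to
position `2 i + 1` are `a i ~ v i` (present iff `x i = 0`) and `b i ~ u i`, `b i ~ a i` (present
iff `y i = 0`). So when both are absent, the vertices at positions `≤ 2 i` form a union of
components containing `u i` but not `v i`. Conversely, when every index has one of them,
`u i` reaches `v i` for each `i`, and the walk `u 1, …, v 1, u 2, …, v n` meets a neighbour of
every vertex.
-/

namespace IVert

variable {n : ℕ}

def pos : IVert n → ℕ
  | u j | a j => 2 * j
  | v j | b j => 2 * j + 1

end IVert

namespace IGraph

open SimpleGraph IVert

variable {n : ℕ} {x y : Fin n → Fin 2}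

lemma adj_iff {s t : IVert n} :
    (IGraph x y).Adj s t ↔ s ≠ t ∧ (iRel x y s t ∨ iRel x y t s) :=
  fromRel_adj _ _ _

lemma adj_u_a (i : Fin n) : (IGraph x y).Adj (u i) (a i) :=
  adj_iff.2 ⟨by simp, Or.inl rfl⟩

lemma adj_v_b (i : Fin n) : (IGraph x y).Adj (v i) (b i) :=
  adj_iff.2 ⟨by simp, Or.inl rfl⟩

lemma adj_v_u {i k : Fin n} (h : (k : ℕ) = i + 1) : (IGraph x y).Adj (v i) (u k) :=
  adj_iff.2 ⟨by simp, Or.inl h⟩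

lemma adj_a_v {i : Fin n} (h : x i = 0) : (IGraph x y).Adj (a i) (v i) :=
  adj_iff.2 ⟨by simp, Or.inl ⟨rfl, h⟩⟩

lemma adj_u_b {i : Fin n} (h : y i = 0) : (IGraph x y).Adj (u i) (b i) :=
  adj_iff.2 ⟨by simp, Or.inr ⟨rfl, h⟩⟩

lemma rung_of_iRel_cut {s t : IVert n} (h : iRel x y s t) {i : Fin n}
    (hcut : s.pos ≤ 2 * i ∧ 2 * i < t.pos ∨ t.pos ≤ 2 * i ∧ 2 * i < s.pos) :
    x i = 0 ∨ y i = 0 := by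
  cases s <;> cases t <;> simp only [iRel, pos] at h hcut <;> grind

lemma rung_of_adj_cut {s t : IVert n} (h : (IGraph x y).Adj s t) {i : Fin n}
    (hs : s.pos ≤ 2 * i) (ht : 2 * i < t.pos) : x i = 0 ∨ y i = 0 := by
  rcases (adj_iff.1 h).2 with h | h
  · exact rung_of_iRel_cut h (Or.inl ⟨hs, ht⟩)
  · exact rung_of_iRel_cut h (Or.inr ⟨hs, ht⟩)

lemma rung_of_reachable_u_v {i : Fin n} (h : (IGraph x y).Reachable (u i) (v i)) :
    x i = 0 ∨ y i = 0 := by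
  obtain ⟨p⟩ := h
  obtain ⟨d, -, hd, hd'⟩ :=
    p.exists_boundary_dart {w | w.pos ≤ 2 * i} (by simp [pos]) (by simp [pos])
  exact rung_of_adj_cut d.adj hd (not_le.1 hd')

lemma reachable_u_v {i : Fin n} (h : x i = 0 ∨ y i = 0) :
    (IGraph x y).Reachable (u i) (v i) := by
  rcases h with hx | hy
  · exact (adj_u_a i).reachable.trans (adj_a_v hx).reachable
  · exact (adj_u_b hy).reachable.trans (adj_v_b i).symm.reachable

lemma reachable_u_zero_u (hrung : ∀ i, x i = 0 ∨ y i = 0) (hn : 0 < n) :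
    ∀ (k : ℕ) (hk : k < n), (IGraph x y).Reachable (u ⟨0, hn⟩) (u ⟨k, hk⟩)
  | 0, _ => .rfl
  | k + 1, hk =>
    have hk' : k < n := k.lt_succ_self.trans hk
    (reachable_u_zero_u hrung hn k hk').trans <|
      (reachable_u_v (hrung _)).trans (adj_v_u (k := ⟨k + 1, hk⟩) rfl).reachable

lemma reachable_u_zero (hrung : ∀ i, x i = 0 ∨ y i = 0) (hn : 0 < n) (w : IVert n) :
    (IGraph x y).Reachable (u ⟨0, hn⟩) w := by
  have hu (i : Fin n) := reachable_u_zero_u hrung hn i i.isLt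
  cases w with
  | u i => exact hu i
  | v i => exact (hu i).trans (reachable_u_v (hrung i))
  | a i => exact (hu i).trans (adj_u_a i).reachable
  | b i => exact ((hu i).trans (reachable_u_v (hrung i))).trans (adj_v_b i).reachable

end IGraph

theorem stmt_15 {n : ℕ} (hn : 1 ≤ n) (x y : Fin n → Fin 2) :
    (IGraph x y).Connected ↔ ∀ i : Fin n, x i = 0 ∨ y i = 0 :=
  ⟨fun h _ => IGraph.rung_of_reachable_u_v (h.preconnected _ _),
    fun h => (SimpleGraph.connected_iff_exists_forall_reachable _).2
      ⟨_, IGraph.reachable_u_zero h hn⟩⟩
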